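/- arXiv:1212.0021 — 2 statements merged into one kernel-verified Lean document; each statement's English description precedes it below -/
import Mathlib

section
/- For every positive integer n, the following three k-subspaces of kG coincide: the k-span of {x·a : x ∈ Rⁿ, a ∈ kG}, the k-span of {a·x : a ∈ kG, x ∈ Rⁿ} (where Rⁿ is the image in kG of the n-th power of the Jacobson radical of kN), and the n-th power Iⁿ of the two-sided ideal I of kG generated by R. In particular, conjugation by any element g of G maps R onto itself. -/
/-!
STATEMENT 0. `k` a field, `G` a finite group, `N ⊴ G`.  `R` is the image in `kG` of the
Jacobson radical of `kN`, `I` the two-sided ideal of `kG` generated by `R`.  For every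
`n ≥ 1`, the `k`-span of `{x * a : x ∈ Rⁿ, a ∈ kG}`, the `k`-span of
`{a * x : a ∈ kG, x ∈ Rⁿ}` (with `Rⁿ` the image of the `n`-th power of the Jacobson radical
of `kN`) and the `n`-th power `Iⁿ` all coincide; in particular conjugation by any `g ∈ G`
maps `R` onto itself.
-/

open Submodule

noncomputable section

variable (k : Type) [Field k] (G : Type) [Group G] [Fintype G] (N : Subgroup G) [N.Normal]

/-- The algebra map `kN →ₐ[k] kG` induced by the inclusion `N ↪ G`. -/
def incl : MonoidAlgebra k ↥N →ₐ[k] MonoidAlgebra k G :=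
  MonoidAlgebra.mapDomainAlgHom k k N.subtype

/-- The Jacobson radical `J` of `kN`, viewed as a `k`-submodule of `kN`. -/
def Jrad : Submodule k (MonoidAlgebra k ↥N) :=
  ((⊥ : Ideal (MonoidAlgebra k ↥N)).jacobson).restrictScalars k

/-- The image in `kG` of the `n`-th power of the Jacobson radical of `kN`. -/
def Rpow (n : ℕ) : Submodule k (MonoidAlgebra k G) :=
  Submodule.map (incl k G N).toLinearMap (Jrad k G N ^ n)

/-- `R`, the image in `kG` of the Jacobson radical of `kN`. -/
def Rimg : Submodule k (MonoidAlgebra k G) := Rpow k G N 1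

/-- `I`, the two-sided ideal of `kG` generated by `R` (as a `k`-submodule this is
`kG * R * kG`, the smallest two-sided ideal containing `R`). -/
def Igen : Submodule k (MonoidAlgebra k G) :=
  (⊤ : Submodule k (MonoidAlgebra k G)) * Rimg k G N * (⊤ : Submodule k (MonoidAlgebra k G))

/-!
Conjugation by `g ∈ G` restricts to an automorphism of `kN` because `N` is normal, and ring
automorphisms preserve the Jacobson radical; hence `R` is stable under conjugation. Since
`g * x = (g * x * g⁻¹) * g`, this gives `kG * R = R * kG`, so `kG` commutes with `R` and with
every `Rⁿ` in the semiring of subspaces of `kG`, and `(kG * R * kG)ⁿ = Rⁿ * kG`.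
-/

namespace Submodule

variable {R A : Type*} [CommSemiring R] [Semiring A] [Algebra R A]

theorem span_setOf_mul_eq_mul_top (M : Submodule R A) :
    span R {y : A | ∃ x ∈ M, ∃ a : A, y = x * a} = M * ⊤ :=
  le_antisymm (span_le.2 fun _ ⟨_, hx, _, hy⟩ => hy ▸ mul_mem_mul hx mem_top)
    (mul_le.2 fun x hx a _ => subset_span ⟨x, hx, a, rfl⟩)

theorem span_setOf_mul_eq_top_mul (M : Submodule R A) :
    span R {y : A | ∃ a : A, ∃ x ∈ M, y = a * x} = ⊤ * M :=
  le_antisymm (span_le.2 fun _ ⟨_, _, hx, hy⟩ => hy ▸ mul_mem_mul mem_top hx)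
    (mul_le.2 fun a _ x hx => subset_span ⟨a, x, hx, rfl⟩)

theorem isIdempotentElem_top : IsIdempotentElem (⊤ : Submodule R A) :=
  le_antisymm le_top fun x _ => mul_one x ▸ mul_mem_mul mem_top mem_top

theorem top_mul_mul_top_pow {M : Submodule R A} (h : Commute ⊤ M) {n : ℕ}
    (hn : n ≠ 0) : (⊤ * M * ⊤) ^ n = M ^ n * ⊤ := by
  rw [h.eq, mul_assoc, isIdempotentElem_top.eq, h.symm.mul_pow, isIdempotentElem_top.pow_eq hn]

end Submodule

theorem Ideal.map_jacobson_bot_of_ringEquiv {R S : Type*} [Ring R] [Ring S] (e : R ≃+* S) :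
    (⊥ : Ideal R).jacobson.map e = (⊥ : Ideal S).jacobson := by
  have h := Ideal.map_jacobson_of_bijective (f := (e : R →+* S)) e.bijective (I := ⊥)
  rwa [Ideal.map_bot] at h

theorem Ideal.map_jacobson_bot_restrictScalars_of_algEquiv {R B : Type*} [CommSemiring R]
    [Ring B] [Algebra R B] (e : B ≃ₐ[R] B) :
    ((⊥ : Ideal B).jacobson.restrictScalars R).map e.toLinearMap =
      (⊥ : Ideal B).jacobson.restrictScalars R := by
  ext x
  rw [Submodule.mem_map_equiv]
  exact (Ideal.symm_apply_mem_of_equiv_iff (f := (e : B ≃+* B))).trans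
    (by rw [Ideal.map_jacobson_bot_of_ringEquiv]; rfl)

namespace MonoidAlgebra

variable {R H : Type*} [CommSemiring R] [Group H]

theorem of_mul_mapDomain_subtype_mul_of_inv (K : Subgroup H) [K.Normal] (g : H)
    (x : MonoidAlgebra R K) :
    of R H g * mapDomainAlgHom R R K.subtype x * of R H g⁻¹ =
      mapDomainAlgHom R R K.subtype (domCongr R R (MulAut.conjNormal g) x) := by
  induction x using induction_linear with
  | zero => simp
  | add x y hx hy => simp only [map_add, mul_add, add_mul, hx, hy]
  | single n b =>
      simp only [mapDomainAlgHom_apply, mapDomain_single, domCongr_single, of_apply,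
        single_mul_single, one_mul, mul_one]
      rfl

theorem span_range_of : Submodule.span R (Set.range (of R H)) = ⊤ := by
  rw [show ⇑(of R H) = ⇑(basis H R) from funext fun g => by simp [of_apply], (basis H R).span_eq]

theorem top_mul_eq_mul_top_of_conj_mem {M : Submodule R (MonoidAlgebra R H)}
    (hM : ∀ g, ∀ x ∈ M, of R H g * x * of R H g⁻¹ ∈ M) : ⊤ * M = M * ⊤ := by
  rw [← span_range_of, ← M.span_eq, Submodule.span_mul_span, Submodule.span_mul_span]
  refine le_antisymm (Submodule.span_mono ?_) (Submodule.span_mono ?_)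
  · rintro _ ⟨_, ⟨g, rfl⟩, x, hx, rfl⟩
    refine ⟨_, hM g x hx, of R H g, ⟨g, rfl⟩, ?_⟩
    dsimp only
    rw [mul_assoc (_ * x), ← map_mul, inv_mul_cancel, map_one, mul_one]
  · rintro _ ⟨x, hx, _, ⟨g, rfl⟩, rfl⟩
    refine ⟨of R H g, ⟨g, rfl⟩, _, inv_inv g ▸ hM g⁻¹ x hx, ?_⟩
    dsimp only
    rw [← mul_assoc, ← mul_assoc, ← map_mul, mul_inv_cancel, map_one, one_mul]

end MonoidAlgebra

omit [Fintype G] [N.Normal] in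
theorem Rpow_eq_Rimg_pow (n : ℕ) : Rpow k G N n = Rimg k G N ^ n := by
  rw [Rpow, Submodule.map_pow, Rimg, Rpow, pow_one]

open MonoidAlgebra in
omit [Fintype G] in
theorem conj_image_Rimg (g : G) :
    (fun x => of k G g * x * of k G g⁻¹) '' (Rimg k G N : Set (MonoidAlgebra k G)) =
      Rimg k G N := by
  have h : (fun x => of k G g * x * of k G g⁻¹) ∘ incl k G N =
      incl k G N ∘ domCongr k k (MulAut.conjNormal g : N ≃* N) :=
    funext (of_mul_mapDomain_subtype_mul_of_inv N g)
  have hJ : domCongr k k (MulAut.conjNormal g : N ≃* N) '' (Jrad k G N : Set (MonoidAlgebra k N))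
      = Jrad k G N :=
    congrArg SetLike.coe <| Ideal.map_jacobson_bot_restrictScalars_of_algEquiv (R := k)
      (domCongr k k (MulAut.conjNormal g : N ≃* N))
  rw [Rimg, Rpow, pow_one, Submodule.map_coe, AlgHom.coe_toLinearMap, ← Set.image_comp, h,
    Set.image_comp, hJ]

open MonoidAlgebra in
omit [Fintype G] in
theorem conj_mem_Rimg (g : G) {x : MonoidAlgebra k G} (hx : x ∈ Rimg k G N) :
    of k G g * x * of k G g⁻¹ ∈ Rimg k G N :=
  (conj_image_Rimg k G N g).subset (Set.mem_image_of_mem _ hx)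

omit [Fintype G] in
theorem commute_top_Rimg : Commute ⊤ (Rimg k G N) :=
  MonoidAlgebra.top_mul_eq_mul_top_of_conj_mem fun g _ => conj_mem_Rimg k G N g

theorem stmt0 (n : ℕ) (hn : 0 < n) :
    (span k {y : MonoidAlgebra k G |
        ∃ x ∈ Rpow k G N n, ∃ a : MonoidAlgebra k G, y = x * a} =
      span k {y : MonoidAlgebra k G |
        ∃ a : MonoidAlgebra k G, ∃ x ∈ Rpow k G N n, y = a * x}) ∧
    (span k {y : MonoidAlgebra k G |
        ∃ x ∈ Rpow k G N n, ∃ a : MonoidAlgebra k G, y = x * a} = Igen k G N ^ n) ∧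
    (∀ g : G,
      (fun x : MonoidAlgebra k G =>
          MonoidAlgebra.of k G g * x * MonoidAlgebra.of k G g⁻¹) ''
        (Rimg k G N : Set (MonoidAlgebra k G)) = (Rimg k G N : Set (MonoidAlgebra k G))) := by
  rw [span_setOf_mul_eq_mul_top, span_setOf_mul_eq_top_mul, Rpow_eq_Rimg_pow, Igen,
    top_mul_mul_top_pow (commute_top_Rimg k G N) hn.ne']
  exact ⟨((commute_top_Rimg k G N).pow_right n).eq.symm, rfl, conj_image_Rimg k G N⟩

end
end

section
/- The two-sided ideal I of kG generated by the image R of the Jacobson radical of kN is a nilpotent ideal (some power Iᵐ is zero), and consequently I is contained in the Jacobson radical of kG. -/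
/-!
STATEMENT 1. `k` a field, `G` a finite group, `N ⊴ G`.  The two-sided ideal `I` of `kG`
generated by the image `R` of the Jacobson radical of `kN` is nilpotent (some power `Iᵐ`
is zero), and consequently `I` is contained in the Jacobson radical of `kG`.
-/

noncomputable section

variable (k : Type) [Field k] (G : Type) [Group G] [Fintype G] (N : Subgroup G) [N.Normal]

/-!
As `kN` is finite-dimensional, it is Artinian, so its Jacobson radical is nilpotent and hence so
is `R`. Conjugation by `g ∈ G` restricts to a ring automorphism of `kN` (as `N` is normal), which
preserves the radical; thus `r * g = g * (g⁻¹ * r * g) ∈ kG * R` for `r ∈ R`, that is,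
`R * kG ⊆ kG * R`. Consequently `I = kG * R` and `I ^ n ⊆ kG * R ^ n = 0`. Finally, for `x` in
the nilpotent left ideal `I` every `y * x` is nilpotent, so `1 + y * x` is a unit and `x` is in
the Jacobson radical.
-/

namespace Submodule

variable {R A : Type*} [CommSemiring R] [Semiring A] [Algebra R A] {S : Submodule R A}

theorem top_mul_top : (⊤ : Submodule R A) * ⊤ = ⊤ :=
  top_le_iff.mp fun x _ => by simpa using mul_mem_mul (mem_top (x := x)) (mem_top (x := 1))

theorem top_mul_mul_top_of_mul_top_le (h : S * ⊤ ≤ ⊤ * S) : ⊤ * S * ⊤ = ⊤ * S := by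
  refine le_antisymm ?_ ?_
  · calc ⊤ * S * ⊤ = ⊤ * (S * ⊤) := mul_assoc _ _ _
      _ ≤ ⊤ * (⊤ * S) := mul_le_mul_right h _
      _ = ⊤ * S := by rw [← mul_assoc, top_mul_top]
  · calc ⊤ * S = ⊤ * S * 1 := (mul_one _).symm
      _ ≤ ⊤ * S * ⊤ := mul_le_mul_right le_top _

theorem top_mul_pow_le_of_mul_top_le (h : S * ⊤ ≤ ⊤ * S) (n : ℕ) :
    (⊤ * S) ^ n ≤ ⊤ * S ^ n := by
  induction n with
  | zero => simp
  | succ n ih =>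
    calc (⊤ * S) ^ (n + 1) = ⊤ * S * (⊤ * S) ^ n := pow_succ' _ _
      _ ≤ ⊤ * S * (⊤ * S ^ n) := mul_le_mul_right ih _
      _ = ⊤ * (S * ⊤) * S ^ n := by simp only [mul_assoc]
      _ ≤ ⊤ * (⊤ * S) * S ^ n := mul_le_mul_left (mul_le_mul_right h _) _
      _ = ⊤ * S ^ (n + 1) := by rw [← mul_assoc, top_mul_top, mul_assoc, ← pow_succ']

theorem isNilpotent_top_mul_mul_top (h : S * ⊤ ≤ ⊤ * S) (hS : IsNilpotent S) :
    IsNilpotent (⊤ * S * ⊤) := by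
  obtain ⟨n, hn⟩ := hS
  refine ⟨n, le_bot_iff.mp ?_⟩
  calc (⊤ * S * ⊤) ^ n = (⊤ * S) ^ n := by rw [top_mul_mul_top_of_mul_top_le h]
    _ ≤ ⊤ * S ^ n := top_mul_pow_le_of_mul_top_le h n
    _ = ⊥ := by rw [hn, zero_eq_bot, mul_bot]

end Submodule

theorem Ideal.mem_jacobson_bot_of_forall_isNilpotent_mul {A : Type*} [Ring A] {x : A}
    (h : ∀ y, IsNilpotent (y * x)) : x ∈ (⊥ : Ideal A).jacobson := by
  refine Ideal.mem_jacobson_iff.mpr fun y => ?_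
  obtain ⟨u, hu⟩ := (h y).isUnit_add_one
  refine ⟨↑u⁻¹, ?_⟩
  rw [Ideal.mem_bot, mul_assoc, ← mul_add_one, ← hu, u.inv_mul, sub_self]

theorem Ideal.map_mem_jacobson_bot {A B : Type*} [Ring A] [Ring B] (e : A ≃+* B) {a : A}
    (ha : a ∈ (⊥ : Ideal A).jacobson) : e a ∈ (⊥ : Ideal B).jacobson := by
  rw [Ideal.jacobson_bot] at ha ⊢
  exact Ring.le_comap_jacobson (e : A →+* B) ha

theorem Submodule.le_jacobson_bot_of_isNilpotent {R A : Type*} [CommSemiring R] [Ring A]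
    [Algebra R A] {S : Submodule R A} (hS : ⊤ * S ≤ S) (hnil : IsNilpotent S) :
    S ≤ (⊥ : Ideal A).jacobson.restrictScalars R := by
  obtain ⟨n, hn⟩ := hnil
  refine fun x hx => Ideal.mem_jacobson_bot_of_forall_isNilpotent_mul fun y => ⟨n, ?_⟩
  have := pow_mem_pow _ (hS (mul_mem_mul (mem_top (x := y)) hx)) n
  rwa [hn, zero_eq_bot, mem_bot] at this

section GroupAlgebra

open MonoidAlgebra

omit [Fintype G] in
theorem single_inv_mul_incl_mul_single (g : G) (a : MonoidAlgebra k N) :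
    single g⁻¹ (1 : k) * incl k G N a * single g 1
      = incl k G N (domCongr k k (MulAut.conjNormal g⁻¹ : N ≃* N) a) := by
  induction a using MonoidAlgebra.induction_on with
  | of n => simp [incl, mul_assoc]
  | add a b ha hb => simp only [map_add, mul_add, add_mul, ha, hb]
  | smul r a ha => simp only [map_smul, smul_mul_assoc, mul_smul_comm, ha]

omit [Fintype G] in
theorem Rimg_mul_top_le : Rimg k G N * ⊤ ≤ ⊤ * Rimg k G N := by
  have conj_mem (g : G) {r : MonoidAlgebra k G} (hr : r ∈ Rimg k G N) :
      single g⁻¹ (1 : k) * r * single g 1 ∈ Rimg k G N := by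
    obtain ⟨a, ha, rfl⟩ := hr
    rw [pow_one] at ha
    refine ⟨_, ?_, (single_inv_mul_incl_mul_single k G N g a).symm⟩
    rw [pow_one]
    exact Ideal.map_mem_jacobson_bot
      (domCongr k k (MulAut.conjNormal g⁻¹ : N ≃* N)).toRingEquiv ha
  refine Submodule.mul_le.mpr fun r hr x _ => ?_
  induction x using MonoidAlgebra.induction_on with
  | of g =>
    have : r * of k G g = single g 1 * (single g⁻¹ (1 : k) * r * single g 1) := by
      rw [← mul_assoc, ← mul_assoc, single_mul_single, mul_inv_cancel, one_mul, of_apply,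
        ← one_def, one_mul]
    rw [this]
    exact Submodule.mul_mem_mul Submodule.mem_top (conj_mem g hr)
  | add x y hx hy => rw [mul_add]; exact add_mem (hx trivial) (hy trivial)
  | smul c x hx => rw [mul_smul_comm]; exact Submodule.smul_mem _ _ (hx trivial)

omit [N.Normal] in
theorem isNilpotent_Rimg : IsNilpotent (Rimg k G N) := by
  have : IsArtinianRing (MonoidAlgebra k N) := .of_finite k _
  obtain ⟨n, hn⟩ := IsArtinianRing.isNilpotent_jacobson_bot (R := MonoidAlgebra k N)
  refine ⟨n + 1, ?_⟩
  rw [Rimg, Rpow, pow_one, ← Submodule.map_pow, Jrad,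
    ← Submodule.restrictScalars_pow n.add_one_ne_zero, Submodule.pow_succ, hn,
    Submodule.zero_eq_bot, Submodule.bot_mul, Submodule.restrictScalars_bot, Submodule.map_bot,
    Submodule.zero_eq_bot]

end GroupAlgebra

theorem stmt1 :
    (∃ m : ℕ, Igen k G N ^ m = (⊥ : Submodule k (MonoidAlgebra k G))) ∧
    Igen k G N ≤
      ((⊥ : Ideal (MonoidAlgebra k G)).jacobson).restrictScalars k := by
  have hI : IsNilpotent (Igen k G N) :=
    Submodule.isNilpotent_top_mul_mul_top (Rimg_mul_top_le k G N) (isNilpotent_Rimg k G N)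
  refine ⟨hI, Submodule.le_jacobson_bot_of_isNilpotent ?_ hI⟩
  rw [Igen, ← mul_assoc, ← mul_assoc, Submodule.top_mul_top]

end
end
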